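/- Let n ≥ 1 and let m be a positive integer. Then there exists a constant C_m > 0 such that for every φ ∈ L¹_m(ℝⁿ) and t > 0, the estimate Σ_{|α|=m} ‖x^α e^{tΔ}φ‖₁ ≤ C_m ( ‖ |x|^m φ ‖₁ + t^{m/2} ‖φ‖₁ ) holds. -/

import Mathlib

open MeasureTheory Real Filter
open scoped ENNReal

noncomputable section

/-- `ℝⁿ` as a Euclidean space. -/
abbrev Rn (n : ℕ) : Type := EuclideanSpace ℝ (Fin n)

/-- The Gauss kernel `G_t(x) = (4πt)^{-n/2} exp(-|x|²/(4t))`. -/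
noncomputable def heatKernel (n : ℕ) (t : ℝ) (x : Rn n) : ℝ :=
  (4 * π * t) ^ (-(n : ℝ) / 2) * Real.exp (-‖x‖ ^ 2 / (4 * t))

/-- The heat semigroup `e^{tΔ}φ = G_t ∗ φ` for `t > 0`, and `e^{0Δ}φ = φ`. -/
noncomputable def heatSG (n : ℕ) (t : ℝ) (φ : Rn n → ℝ) : Rn n → ℝ :=
  if t = 0 then φ else fun x => ∫ y : Rn n, heatKernel n t (x - y) * φ y

/-- The Gauss kernel at time `1`. -/
noncomputable def gaussOne (n : ℕ) : Rn n → ℝ := heatKernel n 1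

/-- The dilation `(δ_t ψ)(x) = t^{-n/2} ψ(t^{-1/2} x)`. -/
noncomputable def dil (n : ℕ) (t : ℝ) (ψ : Rn n → ℝ) : Rn n → ℝ :=
  fun x => t ^ (-(n : ℝ) / 2) * ψ ((t ^ (-(1 : ℝ) / 2) : ℝ) • x)

/-- The monomial `x^α = ∏ x_j^{α_j}` for a multi-index `α`. -/
noncomputable def mono (n : ℕ) (α : Fin n → ℕ) (x : Rn n) : ℝ := ∏ j, x j ^ α j

/-- Membership in the weighted space `L¹_m(ℝⁿ)`:
`x^α φ ∈ L¹` for every multi-index `α` with `|α| ≤ m`. -/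
def MemL1m (n m : ℕ) (φ : Rn n → ℝ) : Prop :=
  ∀ α : Fin n → ℕ, (∑ j, α j) ≤ m →
    MemLp (fun x => mono n α x * φ x) 1 (volume : Measure (Rn n))

/-- The partial derivative `∂_j`. -/
noncomputable def pd (n : ℕ) (j : Fin n) (f : Rn n → ℝ) : Rn n → ℝ :=
  fun x => fderiv ℝ f x (EuclideanSpace.single j 1)

/-- The partial derivative `∂^α` of multi-order `α`. -/
noncomputable def pdMulti (n : ℕ) (α : Fin n → ℕ) (f : Rn n → ℝ) : Rn n → ℝ :=
  (List.finRange n).foldr (fun j g => (pd n j)^[α j] g) f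

/-- The rescaled Hermite polynomial
`h_α(x) = Σ_{2β ≤ α} ((−1)^{|β|} α!/(β!(α−2β)!)) x^{α−2β}`. -/
noncomputable def hPoly (n : ℕ) (α : Fin n → ℕ) (x : Rn n) : ℝ :=
  ∑ β ∈ (Finset.Iic α).filter (fun β => ∀ j, 2 * β j ≤ α j),
    (-1 : ℝ) ^ (∑ j, β j) * (∏ j, ((α j).factorial : ℝ)) /
        ((∏ j, ((β j).factorial : ℝ)) * (∏ j, ((α j - 2 * β j).factorial : ℝ))) *
      ∏ j, x j ^ (α j - 2 * β j)

/-- The decay exponent `(n/2)(1 - 1/q)`. -/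
noncomputable def expo (n : ℕ) (q : ℝ≥0∞) : ℝ := (n : ℝ) / 2 * (1 - (1 / q).toReal)

/-- `u` is a global solution in
`X = (C ∩ L^∞)([0,∞); L¹) ∩ (C ∩ L^∞)((0,∞); L^∞)` of the integral equation
`u(t) = e^{tΔ}φ + ∫₀ᵗ e^{(t-s)Δ} f(u(s)) ds`. -/
structure IsGlobalSolution (n : ℕ) (f : ℝ → ℝ) (φ : Rn n → ℝ) (u : ℝ → Rn n → ℝ) : Prop where
  memL1 : ∀ t : ℝ, 0 ≤ t → MemLp (u t) 1 (volume : Measure (Rn n))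
  memLinf : ∀ t : ℝ, 0 < t → MemLp (u t) ⊤ (volume : Measure (Rn n))
  bddL1 : ∃ M : ℝ≥0∞, M ≠ ⊤ ∧ ∀ t : ℝ, 0 ≤ t → eLpNorm (u t) 1 (volume : Measure (Rn n)) ≤ M
  bddLinf : ∃ M : ℝ≥0∞, M ≠ ⊤ ∧ ∀ t : ℝ, 0 < t → eLpNorm (u t) ⊤ (volume : Measure (Rn n)) ≤ M
  contL1 : ∀ t₀ : ℝ, 0 ≤ t₀ →
    Tendsto (fun t => eLpNorm (fun x => u t x - u t₀ x) 1 (volume : Measure (Rn n)))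
      (nhdsWithin t₀ (Set.Ici 0)) (nhds 0)
  contLinf : ∀ t₀ : ℝ, 0 < t₀ →
    Tendsto (fun t => eLpNorm (fun x => u t x - u t₀ x) ⊤ (volume : Measure (Rn n)))
      (nhdsWithin t₀ (Set.Ioi 0)) (nhds 0)
  inteq : ∀ t : ℝ, 0 ≤ t → ∀ᵐ x : Rn n, u t x =
    heatSG n t φ x + ∫ s in Set.Ioc (0 : ℝ) t, heatSG n (t - s) (fun y => f (u s y)) x

/-- `sup_{q ∈ [1,∞]} sup_{t ≥ 0} (1+t)^{(n/2)(1−1/q)} ‖u(t)‖_q < +∞`. -/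
def DecayBound (n : ℕ) (u : ℝ → Rn n → ℝ) : Prop :=
  ∃ M : ℝ≥0∞, M ≠ ⊤ ∧ ∀ q : ℝ≥0∞, 1 ≤ q → ∀ t : ℝ, 0 ≤ t →
    ENNReal.ofReal ((1 + t) ^ expo n q) * eLpNorm (u t) q (volume : Measure (Rn n)) ≤ M

/-- `ε₀` is a smallness constant: for every initial datum `φ ∈ L¹ ∩ L^∞` with
`‖φ‖₁ + ‖φ‖_∞ ≤ ε₀` there is a global solution in `X`, satisfying the decay
estimate, and it is unique in `X`. -/
def IsSmallnessConstant (n : ℕ) (f : ℝ → ℝ) (ε₀ : ℝ) : Prop :=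
  0 < ε₀ ∧ ∀ φ : Rn n → ℝ, MemLp φ 1 (volume : Measure (Rn n)) →
    MemLp φ ⊤ (volume : Measure (Rn n)) →
    eLpNorm φ 1 (volume : Measure (Rn n)) + eLpNorm φ ⊤ (volume : Measure (Rn n)) ≤
      ENNReal.ofReal ε₀ →
    ∃ u : ℝ → Rn n → ℝ, (IsGlobalSolution n f φ u ∧ DecayBound n u) ∧
      ∀ v : ℝ → Rn n → ℝ, IsGlobalSolution n f φ v →
        ∀ t : ℝ, 0 ≤ t → v t =ᵐ[(volume : Measure (Rn n))] u t

/-- `φ₁ = φ + ∫₀^∞ f(u(s)) ds`. -/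
noncomputable def phiOne (n : ℕ) (f : ℝ → ℝ) (φ : Rn n → ℝ) (u : ℝ → Rn n → ℝ) : Rn n → ℝ :=
  fun x => φ x + ∫ s in Set.Ioi (0 : ℝ), f (u s x)

/-- The approximating sequence: `u₁(t) = e^{tΔ}φ₁` and for `N ≥ 2`,
`u_N(t) = e^{tΔ}φ_N + ∫₀ᵗ e^{(t−s)Δ} f(u_{N−1}(s)) ds` with
`φ_N = φ + ∫₀^∞ (f(u(s)) − f(u_{N−1}(s))) ds`. -/
noncomputable def uSeq (n : ℕ) (f : ℝ → ℝ) (φ : Rn n → ℝ) (u : ℝ → Rn n → ℝ) :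
    ℕ → ℝ → Rn n → ℝ
  | 0 => fun _ _ => 0
  | 1 => fun t => heatSG n t (phiOne n f φ u)
  | (N + 2) => fun t x =>
      heatSG n t (fun y => φ y +
        ∫ s in Set.Ioi (0 : ℝ), (f (u s y) - f (uSeq n f φ u (N + 1) s y))) x +
      ∫ s in Set.Ioc (0 : ℝ) t, heatSG n (t - s) (fun y => f (uSeq n f φ u (N + 1) s y)) x

/-- The moment coefficient `c_α = (1/α!) ∫ y^α ψ(y) dy`. -/
noncomputable def momentCoeff (n : ℕ) (ψ : Rn n → ℝ) (α : Fin n → ℕ) : ℝ :=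
  (∏ j, ((α j).factorial : ℝ))⁻¹ * ∫ y : Rn n, mono n α y * ψ y

/-- The `m`-th order asymptotic profile
`Σ_{k=0}^m 2^{−k} t^{−k/2} Σ_{|α|=k} c_α δ_t(h_α G₁)` with moments of `ψ`. -/
noncomputable def expansion (n m : ℕ) (ψ : Rn n → ℝ) (t : ℝ) (x : Rn n) : ℝ :=
  ∑ k ∈ Finset.range (m + 1), (2 : ℝ) ^ (-(k : ℤ)) * t ^ (-(k : ℝ) / 2) *
    ∑ α ∈ Finset.Nat.antidiagonalTuple n k,
      momentCoeff n ψ α * dil n t (fun z => hPoly n α z * gaussOne n z) x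

end

/-!
For `|α| = m` we have `|x^α| ≤ |x|^m ≤ 2^(m-1) (|x - y|^m + |y|^m)`, so the weighted norm of
`G_t ∗ φ` is bounded by the two convolution terms `‖|·|^m G_t‖₁ ‖φ‖₁` and `‖G_t‖₁ ‖|·|^m φ‖₁`.
The kernel has unit mass, and its `m`-th moment is `O(t^(m/2))` because giving up half of the
Gaussian decay gives `|z|^m G_t(z) ≤ C t^(m/2) G_{2t}(z)`.
-/

namespace MeasureTheory

variable {G : Type*} [MeasurableSpace G] [AddGroup G] [MeasurableAdd₂ G] [MeasurableNeg G]
  {μ : Measure G} [μ.IsAddLeftInvariant] [SFinite μ]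

theorem lintegral_lconvolution {f g : G → ℝ≥0∞} (hf : AEMeasurable f μ) (hg : AEMeasurable g μ) :
    ∫⁻ x, (f ⋆ₗ[μ] g) x ∂μ = (∫⁻ x, f x ∂μ) * ∫⁻ x, g x ∂μ := by
  have hinner : ∀ y, ∫⁻ x, f y * g (-y + x) ∂μ = f y * ∫⁻ x, g x ∂μ := fun y => by
    rw [lintegral_add_left_eq_self (fun x => f y * g x) (-y), lintegral_const_mul'' _ hg]
  simp only [lconvolution_def]
  rw [lintegral_lintegral_swap (by fun_prop)]
  simp_rw [hinner]
  exact lintegral_mul_const'' _ hf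

theorem lintegral_mul_lconvolution_le {w f g : G → ℝ≥0∞} {c : ℝ≥0∞} (hw : Measurable w)
    (hf : AEMeasurable f μ) (hg : Measurable g) (hwc : ∀ a b, w (a + b) ≤ c * (w a + w b)) :
    ∫⁻ x, w x * (f ⋆ₗ[μ] g) x ∂μ ≤
      c * ((∫⁻ x, w x * f x ∂μ) * (∫⁻ x, g x ∂μ) + (∫⁻ x, f x ∂μ) * ∫⁻ x, w x * g x ∂μ) := by
  have hpt : ∀ x, w x * (f ⋆ₗ[μ] g) x ≤ c * (((w * f) ⋆ₗ[μ] g) x + (f ⋆ₗ[μ] (w * g)) x) := by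
    intro x
    simp only [lconvolution_def, Pi.mul_apply]
    refine (lintegral_const_mul_le _ _).trans ?_
    rw [← lintegral_add_left' (by fun_prop), ← lintegral_const_mul'' _ (by fun_prop)]
    refine lintegral_mono fun y => ?_
    calc w x * (f y * g (-y + x)) ≤ c * (w y + w (-y + x)) * (f y * g (-y + x)) := by
          gcongr
          simpa using hwc y (-y + x)
      _ = c * (w y * f y * g (-y + x) + f y * (w (-y + x) * g (-y + x))) := by ring
  calc ∫⁻ x, w x * (f ⋆ₗ[μ] g) x ∂μ
      ≤ ∫⁻ x, c * (((w * f) ⋆ₗ[μ] g) x + (f ⋆ₗ[μ] (w * g)) x) ∂μ := lintegral_mono hpt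
    _ = c * ((∫⁻ x, w x * f x ∂μ) * (∫⁻ x, g x ∂μ) + (∫⁻ x, f x ∂μ) * ∫⁻ x, w x * g x ∂μ) := by
      rw [lintegral_const_mul'' _ (by fun_prop), lintegral_add_left' (by fun_prop),
        lintegral_lconvolution (by fun_prop) hg.aemeasurable,
        lintegral_lconvolution hf (by fun_prop)]
      rfl

end MeasureTheory

lemma ofReal_norm_add_pow_le {E : Type*} [SeminormedAddCommGroup E] (m : ℕ) (a b : E) :
    ENNReal.ofReal (‖a + b‖ ^ m) ≤
      2 ^ (m - 1) * (ENNReal.ofReal (‖a‖ ^ m) + ENNReal.ofReal (‖b‖ ^ m)) := by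
  rw [← ENNReal.ofReal_add (by positivity) (by positivity), ← ENNReal.ofReal_ofNat 2,
    ← ENNReal.ofReal_pow zero_le_two, ← ENNReal.ofReal_mul (by positivity)]
  exact ENNReal.ofReal_le_ofReal ((pow_le_pow_left₀ (norm_nonneg _) (norm_add_le a b) m).trans
    (add_pow_le (norm_nonneg a) (norm_nonneg b) m))

lemma pow_mul_exp_neg_sq_le (m : ℕ) {s t : ℝ} (hs : 0 ≤ s) (ht : 0 < t) :
    s ^ m * exp (-s ^ 2 / (4 * t)) ≤
      (m.factorial : ℝ) * exp 2 * √t ^ m * exp (-s ^ 2 / (8 * t)) := by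
  set r := s / √t with hr
  have hs_eq : s = √t * r := by rw [hr]; field_simp
  have hs_sq : s ^ 2 / (8 * t) = r ^ 2 / 8 := by
    rw [hs_eq, mul_pow, Real.sq_sqrt ht.le]; field_simp
  have hpow : r ^ m ≤ (m.factorial : ℝ) * exp r := by
    have := Real.pow_div_factorial_le_exp r (by positivity) m
    rwa [div_le_iff₀ (by positivity), mul_comm] at this
  -- `r ≤ r² / 8 + 2` is AM-GM, `(r - 4)² ≥ 0`.
  have hlin : r ≤ s ^ 2 / (8 * t) + 2 := by rw [hs_sq]; nlinarith [sq_nonneg (r - 4)]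
  have hexp : exp (s ^ 2 / (8 * t)) * exp (-s ^ 2 / (4 * t)) = exp (-s ^ 2 / (8 * t)) := by
    rw [← exp_add]; congr 1; field_simp; ring
  calc s ^ m * exp (-s ^ 2 / (4 * t)) = √t ^ m * r ^ m * exp (-s ^ 2 / (4 * t)) := by
        rw [hs_eq, mul_pow]
    _ ≤ √t ^ m * ((m.factorial : ℝ) * exp (s ^ 2 / (8 * t) + 2)) * exp (-s ^ 2 / (4 * t)) := by
        gcongr; exact hpow.trans (by gcongr)
    _ = (m.factorial : ℝ) * exp 2 * √t ^ m * exp (-s ^ 2 / (8 * t)) := by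
        rw [exp_add, ← hexp]; ring

lemma abs_mono_le_norm_pow {n : ℕ} (α : Fin n → ℕ) (x : Rn n) :
    |mono n α x| ≤ ‖x‖ ^ ∑ j, α j := by
  rw [mono, Finset.abs_prod, ← Finset.prod_pow_eq_pow_sum]
  refine Finset.prod_le_prod (fun _ _ => abs_nonneg _) fun j _ => ?_
  rw [abs_pow]
  exact pow_le_pow_left₀ (abs_nonneg _) (by simpa using PiLp.norm_apply_le x j) _

section HeatKernel

variable {n : ℕ} {t : ℝ}

lemma heatKernel_nonneg (ht : 0 < t) (x : Rn n) : 0 ≤ heatKernel n t x := by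
  unfold heatKernel
  have := Real.pi_pos
  positivity

lemma continuous_heatKernel (t : ℝ) : Continuous (heatKernel n t) := by
  unfold heatKernel
  fun_prop

lemma integral_heatKernel (ht : 0 < t) : ∫ z, heatKernel n t z = 1 := by
  have h4 : 0 < 4 * π * t := by have := Real.pi_pos; positivity
  have hk : ∀ z : Rn n, heatKernel n t z =
      (4 * π * t) ^ (-(n : ℝ) / 2) * exp (-(4 * t)⁻¹ * ‖z‖ ^ 2) := fun z => by
    rw [heatKernel]; ring_nf
  simp_rw [hk]
  rw [integral_const_mul, GaussianFourier.integral_rexp_neg_mul_sq_norm (by positivity),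
    finrank_euclideanSpace_fin, show π / (4 * t)⁻¹ = 4 * π * t by field_simp,
    ← Real.rpow_add h4, neg_div, neg_add_cancel, Real.rpow_zero]

lemma lintegral_heatKernel (ht : 0 < t) : ∫⁻ z, ENNReal.ofReal (heatKernel n t z) = 1 := by
  rw [← ofReal_integral_eq_lintegral_ofReal
      (.of_integral_ne_zero (by simp [integral_heatKernel ht]))
      (ae_of_all _ (heatKernel_nonneg ht)),
    integral_heatKernel ht, ENNReal.ofReal_one]

lemma norm_pow_mul_heatKernel_le (m : ℕ) (ht : 0 < t) (z : Rn n) :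
    ‖z‖ ^ m * heatKernel n t z ≤
      (m.factorial : ℝ) * exp 2 * 2 ^ ((n : ℝ) / 2) * √t ^ m * heatKernel n (2 * t) z := by
  have h4 : 0 < 4 * π * t := by have := Real.pi_pos; positivity
  have hconst : (4 * π * t) ^ (-(n : ℝ) / 2) =
      2 ^ ((n : ℝ) / 2) * (4 * π * (2 * t)) ^ (-(n : ℝ) / 2) := by
    rw [show 4 * π * (2 * t) = 2 * (4 * π * t) by ring, Real.mul_rpow zero_le_two h4.le,
      ← mul_assoc, ← Real.rpow_add two_pos, neg_div, add_neg_cancel, Real.rpow_zero, one_mul]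
  have hz := pow_mul_exp_neg_sq_le m (norm_nonneg z) ht
  simp only [heatKernel, hconst, show 4 * (2 * t) = 8 * t by ring]
  calc ‖z‖ ^ m * (2 ^ ((n : ℝ) / 2) * (4 * π * (2 * t)) ^ (-(n : ℝ) / 2) *
        exp (-‖z‖ ^ 2 / (4 * t)))
      = 2 ^ ((n : ℝ) / 2) * (4 * π * (2 * t)) ^ (-(n : ℝ) / 2) *
        (‖z‖ ^ m * exp (-‖z‖ ^ 2 / (4 * t))) := by ring
    _ ≤ 2 ^ ((n : ℝ) / 2) * (4 * π * (2 * t)) ^ (-(n : ℝ) / 2) *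
        ((m.factorial : ℝ) * exp 2 * √t ^ m * exp (-‖z‖ ^ 2 / (8 * t))) := by gcongr
    _ = _ := by ring

lemma lintegral_norm_pow_mul_heatKernel_le (m : ℕ) (ht : 0 < t) :
    ∫⁻ z : Rn n, ENNReal.ofReal (‖z‖ ^ m * heatKernel n t z) ≤
      ENNReal.ofReal ((m.factorial : ℝ) * exp 2 * 2 ^ ((n : ℝ) / 2) * t ^ ((m : ℝ) / 2)) := by
  rw [Real.rpow_div_two_eq_sqrt _ ht.le, Real.rpow_natCast]
  calc ∫⁻ z : Rn n, ENNReal.ofReal (‖z‖ ^ m * heatKernel n t z)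
      ≤ ∫⁻ z : Rn n, ENNReal.ofReal ((m.factorial : ℝ) * exp 2 * 2 ^ ((n : ℝ) / 2) * √t ^ m) *
          ENNReal.ofReal (heatKernel n (2 * t) z) := lintegral_mono fun z => by
        rw [← ENNReal.ofReal_mul (by positivity)]
        exact ENNReal.ofReal_le_ofReal (norm_pow_mul_heatKernel_le m ht z)
    _ = _ := by
        rw [lintegral_const_mul' _ _ ENNReal.ofReal_ne_top, lintegral_heatKernel (by positivity),
          mul_one]

lemma enorm_heatSG_le (ht : 0 < t) (φ : Rn n → ℝ) (x : Rn n) :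
    ‖heatSG n t φ x‖ₑ ≤
      ((fun y => ‖φ y‖ₑ) ⋆ₗ fun z => ENNReal.ofReal (heatKernel n t z)) x := by
  rw [heatSG, if_neg ht.ne', lconvolution_def]
  refine (enorm_integral_le_lintegral_enorm _).trans_eq (lintegral_congr fun y => ?_)
  rw [enorm_mul, Real.enorm_eq_ofReal (heatKernel_nonneg ht _), neg_add_eq_sub, mul_comm]

end HeatKernel

lemma eLpNorm_mono_mul_heatSG_le {n m : ℕ} {t : ℝ} (ht : 0 < t) {φ : Rn n → ℝ}
    (hφ : AEStronglyMeasurable φ) {α : Fin n → ℕ} (hα : ∑ j, α j = m) :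
    eLpNorm (fun x => mono n α x * heatSG n t φ x) 1 ≤
      ENNReal.ofReal (2 ^ (m - 1) * ((m.factorial : ℝ) * exp 2 * 2 ^ ((n : ℝ) / 2))) *
        (eLpNorm (fun x : Rn n => ‖x‖ ^ m * φ x) 1 +
          ENNReal.ofReal (t ^ ((m : ℝ) / 2)) * eLpNorm φ 1) := by
  set D : ℝ := (m.factorial : ℝ) * exp 2 * 2 ^ ((n : ℝ) / 2)
  have hD : 1 ≤ ENNReal.ofReal D := by
    refine ENNReal.one_le_ofReal.2 (one_le_mul_of_one_le_of_one_le ?_ ?_)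
    · exact one_le_mul_of_one_le_of_one_le (mod_cast m.factorial_pos) (one_le_exp zero_le_two)
    · exact Real.one_le_rpow one_le_two (by positivity)
  have hweight : ∀ x : Rn n, ‖mono n α x‖ₑ ≤ ENNReal.ofReal (‖x‖ ^ m) := fun x => by
    rw [← ofReal_norm, ← hα]
    exact ENNReal.ofReal_le_ofReal (abs_mono_le_norm_pow α x)
  have hwφ : ∫⁻ x, ENNReal.ofReal (‖x‖ ^ m) * ‖φ x‖ₑ =
      eLpNorm (fun x : Rn n => ‖x‖ ^ m * φ x) 1 := by
    rw [eLpNorm_one_eq_lintegral_enorm]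
    refine lintegral_congr fun x => ?_
    rw [enorm_mul, Real.enorm_eq_ofReal (pow_nonneg (norm_nonneg x) m)]
  have hwK : ∫⁻ z : Rn n, ENNReal.ofReal (‖z‖ ^ m) * ENNReal.ofReal (heatKernel n t z) ≤
      ENNReal.ofReal D * ENNReal.ofReal (t ^ ((m : ℝ) / 2)) := by
    rw [← ENNReal.ofReal_mul (by positivity)]
    refine le_of_eq_of_le (lintegral_congr fun z => ?_) (lintegral_norm_pow_mul_heatKernel_le m ht)
    rw [ENNReal.ofReal_mul (by positivity)]
  rw [eLpNorm_one_eq_lintegral_enorm, eLpNorm_one_eq_lintegral_enorm (f := φ), ← hwφ]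
  calc ∫⁻ x, ‖mono n α x * heatSG n t φ x‖ₑ
      ≤ ∫⁻ x, ENNReal.ofReal (‖x‖ ^ m) *
          ((fun y => ‖φ y‖ₑ) ⋆ₗ fun z => ENNReal.ofReal (heatKernel n t z)) x :=
        lintegral_mono fun x => by
          rw [enorm_mul]; exact mul_le_mul' (hweight x) (enorm_heatSG_le ht φ x)
    _ ≤ 2 ^ (m - 1) * ((∫⁻ x, ENNReal.ofReal (‖x‖ ^ m) * ‖φ x‖ₑ) *
          (∫⁻ z, ENNReal.ofReal (heatKernel n t z)) +
          (∫⁻ x, ‖φ x‖ₑ) * ∫⁻ z, ENNReal.ofReal (‖z‖ ^ m) * ENNReal.ofReal (heatKernel n t z)) :=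
        lintegral_mul_lconvolution_le (by fun_prop) hφ.enorm
          (continuous_heatKernel t).measurable.ennreal_ofReal (ofReal_norm_add_pow_le m)
    _ ≤ 2 ^ (m - 1) * (ENNReal.ofReal D * (∫⁻ x, ENNReal.ofReal (‖x‖ ^ m) * ‖φ x‖ₑ) +
          ENNReal.ofReal D * (ENNReal.ofReal (t ^ ((m : ℝ) / 2)) * ∫⁻ x, ‖φ x‖ₑ)) := by
        rw [lintegral_heatKernel ht, mul_one]
        gcongr _ * (?_ + ?_)
        · exact le_mul_of_one_le_left' hD
        · calc _ ≤ (∫⁻ x, ‖φ x‖ₑ) * (ENNReal.ofReal D * ENNReal.ofReal (t ^ ((m : ℝ) / 2))) := by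
                gcongr
            _ = _ := by ring
    _ = _ := by
        rw [ENNReal.ofReal_mul (by positivity : (0 : ℝ) ≤ 2 ^ (m - 1)),
          ENNReal.ofReal_pow zero_le_two, ENNReal.ofReal_ofNat]
        ring

theorem stmt12_general (n : ℕ) (m : ℕ) :
    ∃ C : ℝ, 0 < C ∧ ∀ φ : Rn n → ℝ, MemL1m n m φ → ∀ t : ℝ, 0 < t →
      ∑ α ∈ Finset.Nat.antidiagonalTuple n m,
          eLpNorm (fun x => mono n α x * heatSG n t φ x) 1 (volume : Measure (Rn n)) ≤
        ENNReal.ofReal C *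
          (eLpNorm (fun x : Rn n => ‖x‖ ^ m * φ x) 1 (volume : Measure (Rn n)) +
            ENNReal.ofReal (t ^ ((m : ℝ) / 2)) * eLpNorm φ 1 (volume : Measure (Rn n))) := by
  set N := (Finset.Nat.antidiagonalTuple n m).card
  set C₀ : ℝ := 2 ^ (m - 1) * ((m.factorial : ℝ) * exp 2 * 2 ^ ((n : ℝ) / 2))
  -- `N + 1` rather than `N`: there are no multi-indices when `n = 0`, but `C` must be positive.
  refine ⟨(N + 1) * C₀, by positivity, fun φ hφ t ht => ?_⟩
  have hφ_meas : AEStronglyMeasurable φ := by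
    simpa [mono] using (hφ 0 (by simp)).aestronglyMeasurable
  refine (Finset.sum_le_card_nsmul _ _ _ fun α hα => eLpNorm_mono_mul_heatSG_le ht hφ_meas
    (Finset.Nat.mem_antidiagonalTuple.1 hα)).trans ?_
  rw [nsmul_eq_mul, ← mul_assoc, ← ENNReal.ofReal_natCast, ← ENNReal.ofReal_mul (by positivity)]
  gcongr
  linarith

/-- estimate (2.12):
`Σ_{|α|=m} ‖x^α e^{tΔ}φ‖₁ ≤ C_m ( ‖|x|^m φ‖₁ + t^{m/2} ‖φ‖₁ )`. -/
theorem stmt12 (n : ℕ) (hn : 1 ≤ n) (m : ℕ) (hm : 1 ≤ m) :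
    ∃ C : ℝ, 0 < C ∧ ∀ φ : Rn n → ℝ, MemL1m n m φ → ∀ t : ℝ, 0 < t →
      ∑ α ∈ Finset.Nat.antidiagonalTuple n m,
          eLpNorm (fun x => mono n α x * heatSG n t φ x) 1 (volume : Measure (Rn n)) ≤
        ENNReal.ofReal C *
          (eLpNorm (fun x : Rn n => ‖x‖ ^ m * φ x) 1 (volume : Measure (Rn n)) +
            ENNReal.ofReal (t ^ ((m : ℝ) / 2)) * eLpNorm φ 1 (volume : Measure (Rn n))) :=
  stmt12_general n m
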